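/- arXiv:1401.2200 — 2 statements merged into one kernel-verified Lean document; each statement's English description precedes it below -/
import Mathlib

section
/- Consider the feasibility set X_ε := {x ∈ X : P({δ : g(x,δ) ≤ 0}) ≥ 1−ε} of a chance-constrained program, where X ⊆ ℝⁿ and g(·,δ) is convex for each δ. Then conv(X_ε) ⊆ X_{(n+1)ε}, i.e., every point of the convex hull of X_ε satisfies P({δ : g(x,δ) ≤ 0}) ≥ 1−(n+1)ε. -/
/-!
Every point of the convex hull of `X_ε` is, by Carathéodory's theorem, a convex combination of at
most `n + 1` points of `X_ε`. Each sublevel set of a convex function is convex, so every scenario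
`δ` that is feasible for all of these points is feasible for their convex combination, and the
union bound over the at most `n + 1` exceptional events gives violation probability at most
`(n + 1) ε`.
-/

open MeasureTheory Set

theorem exists_finset_card_le_finrank_succ_of_mem_convexHull {𝕜 E : Type*} [Field 𝕜]
    [LinearOrder 𝕜] [IsStrictOrderedRing 𝕜] [AddCommGroup E] [Module 𝕜 E]
    [FiniteDimensional 𝕜 E] {s : Set E} {x : E} (hx : x ∈ convexHull 𝕜 s) :
    ∃ t : Finset E, ↑t ⊆ s ∧ t.card ≤ Module.finrank 𝕜 E + 1 ∧ x ∈ convexHull 𝕜 (t : Set E) := by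
  rw [convexHull_eq_union] at hx
  simp only [mem_iUnion] at hx
  obtain ⟨t, hts, hindep, hxt⟩ := hx
  refine ⟨t, hts, ?_, hxt⟩
  calc t.card = Fintype.card t := (Fintype.card_coe t).symm
    _ ≤ Module.finrank 𝕜 (vectorSpan 𝕜 (range ((↑) : t → E))) + 1 := hindep.card_le_finrank_succ
    _ ≤ Module.finrank 𝕜 E + 1 := by gcongr; exact Submodule.finrank_le _

theorem one_sub_card_mul_le_measureReal_biInter {Ω ι : Type*} [MeasurableSpace Ω]
    {μ : Measure Ω} [IsProbabilityMeasure μ] {t : Finset ι} {A : ι → Set Ω} {ε : ℝ}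
    (hA : ∀ i ∈ t, MeasurableSet (A i)) (hε : ∀ i ∈ t, 1 - ε ≤ μ.real (A i)) :
    1 - t.card * ε ≤ μ.real (⋂ i ∈ t, A i) := by
  have hcompl : μ.real (⋂ i ∈ t, A i)ᶜ ≤ t.card * ε :=
    calc μ.real (⋂ i ∈ t, A i)ᶜ = μ.real (⋃ i ∈ t, (A i)ᶜ) := by rw [compl_iInter₂]
      _ ≤ ∑ i ∈ t, μ.real (A i)ᶜ := measureReal_biUnion_finset_le t _
      _ ≤ ∑ _i ∈ t, ε := Finset.sum_le_sum fun i hi => by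
          rw [probReal_compl_eq_one_sub (hA i hi)]; linarith [hε i hi]
      _ = t.card * ε := by rw [Finset.sum_const, nsmul_eq_mul]
  rw [probReal_compl_eq_one_sub (Finset.measurableSet_biInter t hA)] at hcompl
  linarith

theorem stmt8 {n : ℕ} {Δ : Type*} [MeasurableSpace Δ] (μ : Measure Δ)
    [IsProbabilityMeasure μ]
    (g : EuclideanSpace ℝ (Fin n) → Δ → ℝ)
    (hconv : ∀ δ, ConvexOn ℝ Set.univ (fun x => g x δ))
    (hmeas : ∀ x, MeasurableSet {δ | g x δ ≤ 0})
    (X : Set (EuclideanSpace ℝ (Fin n))) (hX : Convex ℝ X)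
    (ε : ℝ) (hε : ε ∈ Set.Ioo (0:ℝ) 1) :
    convexHull ℝ {x ∈ X | 1 - ε ≤ (μ {δ | g x δ ≤ 0}).toReal}
      ⊆ {x ∈ X | 1 - ((n : ℝ) + 1) * ε ≤ (μ {δ | g x δ ≤ 0}).toReal} := by
  intro x hx
  obtain ⟨t, hts, hcard, hxt⟩ := exists_finset_card_le_finrank_succ_of_mem_convexHull hx
  have hfeasible : ⋂ y ∈ t, {δ | g y δ ≤ 0} ⊆ {δ | g x δ ≤ 0} := fun δ hδ => by
    obtain ⟨y, hy, hxy⟩ := (hconv δ).exists_ge_of_mem_convexHull (subset_univ _) hxt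
    exact hxy.trans (mem_iInter₂.mp hδ y hy)
  have hcard' : (t.card : ℝ) ≤ n + 1 := by
    rw [finrank_euclideanSpace_fin] at hcard
    exact_mod_cast hcard
  refine ⟨convexHull_min (fun y hy => hy.1) hX hx, ?_⟩
  calc 1 - (n + 1) * ε ≤ 1 - t.card * ε := by gcongr; exact hε.1.le
    _ ≤ μ.real (⋂ y ∈ t, {δ | g y δ ≤ 0}) :=
      one_sub_card_mul_le_measureReal_biInter (fun y _ => hmeas y) (fun y hy => (hts hy).2)
    _ ≤ μ.real {δ | g x δ ≤ 0} := measureReal_mono hfeasible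
end

section
/- In the counterexample SP_ex with N ≥ 5 samples θ_i = (i−1)·2π/N, removing the constraint with index i = 2 strictly decreases the optimal value: letting J*(θ) := (√(1+τ(θ)²) − 1)/τ(θ)² − 1 with τ(θ) = sin(θ)/(1+cos(θ)), one has J*(4π/N) < J*(2π/N). Hence every one of the N sampled constraints is a support constraint. -/
/-! By the half-angle formula `τ(θ) = tan (θ / 2)`, and rationalising the numerator gives
`(√(1 + t²) - 1) / t² = 1 / (√(1 + t²) + 1)`, which is strictly decreasing for `t > 0`.
It remains that `tan` is strictly increasing on `(0, π / 2)`, which contains `π / N < 2π / N`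
as soon as `N ≥ 5`. -/

open Real Set

lemma sin_two_mul_div_one_add_cos_two_mul {x : ℝ} (hx : cos x ≠ 0) :
    sin (2 * x) / (1 + cos (2 * x)) = tan x := by
  rw [sin_two_mul, cos_two_mul, tan_eq_sin_div_cos]
  field_simp
  ring

lemma sqrt_one_add_sq_sub_one_div_sq {t : ℝ} (ht : t ≠ 0) :
    (√(1 + t ^ 2) - 1) / t ^ 2 = 1 / (√(1 + t ^ 2) + 1) := by
  have hsq : √(1 + t ^ 2) ^ 2 = 1 + t ^ 2 := sq_sqrt (by positivity)
  rw [div_eq_div_iff (pow_ne_zero 2 ht) (by positivity)]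
  linear_combination hsq

lemma strictAntiOn_sqrt_one_add_sq_sub_one_div_sq :
    StrictAntiOn (fun t : ℝ => (√(1 + t ^ 2) - 1) / t ^ 2) (Ioi 0) := by
  intro s hs t ht hst
  simp only [sqrt_one_add_sq_sub_one_div_sq (ne_of_gt hs),
    sqrt_one_add_sq_sub_one_div_sq (ne_of_gt ht)]
  have hsqrt : √(1 + s ^ 2) < √(1 + t ^ 2) :=
    sqrt_lt_sqrt (by positivity) (by gcongr; exact le_of_lt hs)
  gcongr

theorem stmt12 (N : ℕ) (hN : 5 ≤ N) :
    (Real.sqrt (1 + (Real.sin (4 * Real.pi / N) / (1 + Real.cos (4 * Real.pi / N))) ^ 2) - 1) /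
        (Real.sin (4 * Real.pi / N) / (1 + Real.cos (4 * Real.pi / N))) ^ 2 - 1
      < (Real.sqrt (1 + (Real.sin (2 * Real.pi / N) / (1 + Real.cos (2 * Real.pi / N))) ^ 2) - 1) /
          (Real.sin (2 * Real.pi / N) / (1 + Real.cos (2 * Real.pi / N))) ^ 2 - 1 := by
  have hN' : (5 : ℝ) ≤ N := by exact_mod_cast hN
  have hsmall : 0 < π / N := by positivity
  have hlt : π / N < 2 * π / N := by gcongr; linarith [pi_pos]
  have hlarge : 2 * π / N < π / 2 := by
    rw [div_lt_div_iff₀ (by linarith) two_pos]; nlinarith [pi_pos]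
  have hcos {x : ℝ} (h0 : 0 < x) (h1 : x < π / 2) : cos x ≠ 0 :=
    (cos_pos_of_mem_Ioo ⟨by linarith, h1⟩).ne'
  rw [show 4 * π / N = 2 * (2 * π / N) by ring,
    sin_two_mul_div_one_add_cos_two_mul (hcos (hsmall.trans hlt) hlarge),
    show 2 * π / N = 2 * (π / N) by ring,
    sin_two_mul_div_one_add_cos_two_mul (hcos hsmall (hlt.trans hlarge)), ← mul_div_assoc]
  have htan_pos : 0 < tan (π / N) := tan_pos_of_pos_of_lt_pi_div_two hsmall (by linarith)
  have htan_lt : tan (π / N) < tan (2 * π / N) :=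
    tan_lt_tan_of_nonneg_of_lt_pi_div_two hsmall.le hlarge hlt
  linarith [strictAntiOn_sqrt_one_add_sq_sub_one_div_sq htan_pos (htan_pos.trans htan_lt) htan_lt]
end
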